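/- arXiv:2106.14182 — 2 statements merged into one kernel-verified Lean document; each statement's English description precedes it below -/
import Mathlib

section
/- Let u : ℝⁿ → ℝ be measurable with ∫ |u| dx = 1 and ∫ ‖x‖^α |u(x)| dx < ∞ for some α > 0. Set A = A_{n,α} where A^{n/α} = |S^{n-1}| Γ(n/α)/α. Then ∫ |u(x)| log(1/|u(x)|) dx ≤ A ∫ ‖x‖^α |u(x)| dx, with the convention that the integrand is 0 where u = 0. -/
/-!
Gibbs' inequality against the density `E x = exp (-A * ‖x‖ ^ α)`. Pointwise,
`t * log t⁻¹ ≤ c * t + exp (-c) - t` for `t ≥ 0` (this is `1 + y ≤ exp y`), so integrating with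
`t = |u x|`, `c = A * ‖x‖ ^ α` bounds the entropy by `A * ∫ ‖x‖ ^ α * |u x| + (∫ E - ∫ |u|)`.
In polar coordinates `∫ E = A ^ (-n / α) * |S^{n-1}| * Γ(n / α) / α`, so the normalisation of `A` is
exactly `∫ E = 1 = ∫ |u|`. If the entropy integrand is not integrable, Bochner's convention makes
the left side `0`.
-/

open MeasureTheory Real Module

noncomputable def unitSphereArea (n : ℕ) : ℝ := 2 * π ^ ((n : ℝ) / 2) / Gamma ((n : ℝ) / 2)

lemma mul_log_inv_le (t c : ℝ) (ht : 0 ≤ t) : t * log t⁻¹ ≤ c * t + (exp (-c) - t) := by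
  rcases ht.eq_or_lt with rfl | ht
  · simp [(exp_pos _).le]
  -- `1 + y ≤ exp y` at `y = -c - log t`, multiplied by `t = exp (log t)`
  have key := mul_le_mul_of_nonneg_left (add_one_le_exp (-c - log t)) ht.le
  rw [exp_sub, exp_log ht, mul_div_cancel₀ _ ht.ne'] at key
  rw [log_inv]
  linarith

lemma integral_mul_log_inv_le {X : Type*} [MeasurableSpace X] {μ : Measure X} {f c : X → ℝ}
    (hf0 : ∀ x, 0 ≤ f x) (hf : Integrable f μ) (hcf : Integrable (fun x ↦ c x * f x) μ)
    (hc : Integrable (fun x ↦ exp (-c x)) μ)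
    (hent : Integrable (fun x ↦ f x * log (f x)⁻¹) μ) :
    ∫ x, f x * log (f x)⁻¹ ∂μ ≤
      ∫ x, c x * f x ∂μ + (∫ x, exp (-c x) ∂μ - ∫ x, f x ∂μ) := by
  have hexp_sub : Integrable (fun x ↦ exp (-c x) - f x) μ := hc.sub hf
  calc ∫ x, f x * log (f x)⁻¹ ∂μ ≤ ∫ x, (c x * f x + (exp (-c x) - f x)) ∂μ :=
        integral_mono hent (hcf.add hexp_sub) fun x ↦ mul_log_inv_le (f x) (c x) (hf0 x)
    _ = _ := by rw [integral_add hcf hexp_sub, integral_sub hc hf]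

lemma pow_pred_smul_eq_rpow_mul {n : ℕ} (hn : 1 ≤ n) (g : ℝ → ℝ) :
    (fun y : ℝ ↦ y ^ (n - 1) • g y) = fun y ↦ y ^ ((n : ℝ) - 1) * g y := by
  ext y
  rw [smul_eq_mul, ← rpow_natCast, Nat.cast_sub hn, Nat.cast_one]

section RadialIntegrals

variable {E : Type*} [NormedAddCommGroup E] [InnerProductSpace ℝ E] [FiniteDimensional ℝ E]
  [MeasurableSpace E] [BorelSpace E] [Nontrivial E]

lemma finrank_mul_measureReal_unitBall :
    finrank ℝ E * volume.real (Metric.ball (0 : E) 1) = unitSphereArea (finrank ℝ E) := by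
  have hn : (0 : ℝ) < finrank ℝ E := Nat.cast_pos.mpr finrank_pos
  rw [measureReal_def, InnerProductSpace.volume_ball, ENNReal.toReal_mul, ENNReal.toReal_pow,
    ENNReal.toReal_ofReal zero_le_one, one_pow, one_mul, ENNReal.toReal_ofReal (by positivity),
    Gamma_add_one (by positivity), sqrt_eq_rpow, ← rpow_natCast, ← rpow_mul pi_pos.le,
    unitSphereArea]
  field_simp

variable {b p : ℝ}

lemma integrable_exp_neg_mul_norm_rpow (hb : 0 < b) (hp : 0 < p) :
    Integrable (fun x : E ↦ exp (-b * ‖x‖ ^ p)) := by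
  have hn : (0 : ℝ) < finrank ℝ E := Nat.cast_pos.mpr finrank_pos
  rw [integrable_fun_norm_addHaar volume (f := fun y ↦ exp (-b * y ^ p)),
    pow_pred_smul_eq_rpow_mul finrank_pos]
  exact integrableOn_rpow_mul_exp_neg_mul_rpow (by linarith) hp hb

lemma integral_exp_neg_mul_norm_rpow (hb : 0 < b) (hp : 0 < p) :
    ∫ x : E, exp (-b * ‖x‖ ^ p) =
      b ^ (-(finrank ℝ E : ℝ) / p) *
        (unitSphereArea (finrank ℝ E) * Gamma (finrank ℝ E / p) / p) := by
  have hn : (0 : ℝ) < finrank ℝ E := Nat.cast_pos.mpr finrank_pos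
  rw [integral_fun_norm_addHaar volume (fun y ↦ exp (-b * y ^ p)),
    pow_pred_smul_eq_rpow_mul finrank_pos, integral_rpow_mul_exp_neg_mul_rpow hp (by linarith) hb,
    nsmul_eq_mul, smul_eq_mul, ← mul_assoc, finrank_mul_measureReal_unitBall, sub_add_cancel]
  ring

end RadialIntegrals

theorem entropy_le_weighted_moment_general (n : ℕ) (α A : ℝ) (hn : 1 ≤ n) (hα : 0 < α)
    (hApos : 0 < A)
    (hA : A ^ ((n : ℝ) / α) =
      (2 * Real.pi ^ ((n : ℝ) / 2) / Real.Gamma ((n : ℝ) / 2)) * Real.Gamma ((n : ℝ) / α) / α)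
    (u : EuclideanSpace ℝ (Fin n) → ℝ)
    (hnorm : ∫ x, |u x| = 1)
    (hmom : Integrable (fun x : EuclideanSpace ℝ (Fin n) => ‖x‖ ^ α * |u x|)) :
    ∫ x, |u x| * Real.log (|u x|)⁻¹ ≤ A * ∫ x, ‖x‖ ^ α * |u x| := by
  have : Nontrivial (EuclideanSpace ℝ (Fin n)) := by
    have : Nonempty (Fin n) := ⟨⟨0, hn⟩⟩
    infer_instance
  by_cases hent : Integrable fun x ↦ |u x| * log (|u x|)⁻¹
  swap
  · rw [integral_undef hent]
    exact mul_nonneg hApos.le (integral_nonneg fun x ↦ by positivity)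
  have hu : Integrable fun x ↦ |u x| := by
    by_contra h
    rw [integral_undef h] at hnorm
    exact zero_ne_one hnorm
  have hgauss : ∫ x : EuclideanSpace ℝ (Fin n), exp (-(A * ‖x‖ ^ α)) = 1 := by
    simp_rw [← neg_mul]
    rw [integral_exp_neg_mul_norm_rpow hApos hα, finrank_euclideanSpace_fin, unitSphereArea, ← hA,
      ← rpow_add hApos, neg_div, neg_add_cancel, rpow_zero]
  have hgibbs := integral_mul_log_inv_le (c := fun x ↦ A * ‖x‖ ^ α) (fun x ↦ abs_nonneg (u x)) hu
    (by simpa only [mul_assoc] using hmom.const_mul A)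
    (by simpa only [neg_mul] using integrable_exp_neg_mul_norm_rpow hApos hα) hent
  simpa only [mul_assoc, integral_const_mul, hgauss, hnorm, sub_self, add_zero] using hgibbs

theorem entropy_le_weighted_moment (n : ℕ) (α A : ℝ) (hn : 1 ≤ n) (hα : 0 < α)
    (hApos : 0 < A)
    (hA : A ^ ((n : ℝ) / α) =
      (2 * Real.pi ^ ((n : ℝ) / 2) / Real.Gamma ((n : ℝ) / 2)) * Real.Gamma ((n : ℝ) / α) / α)
    (u : EuclideanSpace ℝ (Fin n) → ℝ) (hu : Measurable u)
    (hnorm : ∫ x, |u x| = 1)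
    (hmom : Integrable (fun x : EuclideanSpace ℝ (Fin n) => ‖x‖ ^ α * |u x|)) :
    ∫ x, |u x| * Real.log (|u x|)⁻¹ ≤ A * ∫ x, ‖x‖ ^ α * |u x| :=
  entropy_le_weighted_moment_general n α A hn hα hApos hA u hnorm hmom
end

section
/- Equality holds in the Kubo–Ogawa–Suguro inequality if u(x) = c_{n,α}(1 + ‖x‖^α)^{-n}, where c_{n,α} = αΓ(n)/(|S^{n-1}| Γ(n/α) Γ(n/α')): for this u one has −∫ u log u dx = n ∫ u(x) log( C_{n,α}(1 + ‖x‖^α) ) dx, with C_{n,α} = c_{n,α}^{−1/n}. -/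
open MeasureTheory Real

theorem kubo_ogawa_suguro_equality (n : ℕ) (α α' c : ℝ) (hn : 1 ≤ n) (hα : 1 < α)
    (hα' : 1 / α + 1 / α' = 1)
    (hc : c = α * Real.Gamma (n : ℝ) /
      ((2 * Real.pi ^ ((n : ℝ) / 2) / Real.Gamma ((n : ℝ) / 2)) *
        Real.Gamma ((n : ℝ) / α) * Real.Gamma ((n : ℝ) / α')))
    (u : EuclideanSpace ℝ (Fin n) → ℝ)
    (hu : ∀ x, u x = c * (1 + ‖x‖ ^ α) ^ (-(n : ℝ))) :
    -∫ x, u x * Real.log (u x) =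
      (n : ℝ) * ∫ x : EuclideanSpace ℝ (Fin n),
        u x * Real.log (c ^ (-(1 / (n : ℝ))) * (1 + ‖x‖ ^ α)) := by
  have hn0 : (0 : ℝ) < n := by exact_mod_cast Nat.lt_of_lt_of_le Nat.zero_lt_one hn
  have hα0 : (0 : ℝ) < α := lt_trans one_pos hα
  have hα'0 : (0 : ℝ) < α' := by
    have h1 : 0 < 1 / α' := by
      have : 1 / α < 1 := by
        rw [div_lt_one hα0]; exact hα
      linarith
    exact (one_div_pos).mp h1
  have hc0 : 0 < c := by
    rw [hc]
    apply div_pos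
    · exact mul_pos hα0 (Real.Gamma_pos_of_pos hn0)
    · apply mul_pos
      apply mul_pos
      · apply div_pos
        · exact mul_pos two_pos (Real.rpow_pos_of_pos Real.pi_pos _)
        · exact Real.Gamma_pos_of_pos (by positivity)
      · exact Real.Gamma_pos_of_pos (div_pos hn0 hα0)
      · exact Real.Gamma_pos_of_pos (div_pos hn0 hα'0)
  have key : ∀ x : EuclideanSpace ℝ (Fin n),
      -(u x * Real.log (u x)) =
        (n : ℝ) * (u x * Real.log (c ^ (-(1 / (n : ℝ))) * (1 + ‖x‖ ^ α))) := by
    intro x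
    have hr : (0 : ℝ) < 1 + ‖x‖ ^ α := by
      have : (0 : ℝ) ≤ ‖x‖ ^ α := Real.rpow_nonneg (norm_nonneg x) α
      linarith
    rw [hu x, Real.log_mul (ne_of_gt hc0)
        (ne_of_gt (Real.rpow_pos_of_pos hr _)),
      Real.log_rpow hr,
      Real.log_mul (ne_of_gt (Real.rpow_pos_of_pos hc0 _)) (ne_of_gt hr),
      Real.log_rpow hc0]
    field_simp
    ring
  calc -∫ x, u x * Real.log (u x)
      = ∫ x, -(u x * Real.log (u x)) := (integral_neg _).symm
    _ = ∫ x, (n : ℝ) * (u x * Real.log (c ^ (-(1 / (n : ℝ))) * (1 + ‖x‖ ^ α))) := by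
        simp only [key]
    _ = (n : ℝ) * ∫ x : EuclideanSpace ℝ (Fin n),
          u x * Real.log (c ^ (-(1 / (n : ℝ))) * (1 + ‖x‖ ^ α)) := MeasureTheory.integral_const_mul _ _
end
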